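/- arXiv:2411.04213 — 4 statements merged into one kernel-verified Lean document; each statement's English description precedes it below -/
import Mathlib

section
/- Let p > 3 be a prime with p ≡ 3 (mod 4) and suppose q = 2p + 1 is also prime. Then q divides 2^p − 1 and q < 2^p − 1, so that 2^p − 1 is composite. -/
lemma aux_pow (n : ℕ) (hn : 4 ≤ n) : 2 * n + 1 < 2 ^ n - 1 := by
  induction n with
  | zero => omega
  | succ k ih =>
    rcases Nat.lt_or_ge k 4 with h | h
    · interval_cases k <;> simp_all <;> norm_num
    · have h1 := ih h
      have h2 : (16:ℕ) ≤ 2 ^ k := by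
        calc (16:ℕ) = 2 ^ 4 := by norm_num
        _ ≤ 2 ^ k := Nat.pow_le_pow_right (by norm_num) h
      have h3 : 2 ^ (k + 1) = 2 * 2 ^ k := by ring
      omega

/-- If `p > 3` is a prime with `p ≡ 3 (mod 4)` and `q = 2p + 1` is also prime, then
`q ∣ 2^p − 1`, `q < 2^p − 1`, and `2^p − 1` is composite (i.e. `> 1` and not prime). -/
theorem stmt_0 (p : ℕ) (hp : p.Prime) (hp3 : 3 < p) (hpmod : p % 4 = 3)
    (hq : (2 * p + 1).Prime) :
    (2 * p + 1) ∣ 2 ^ p - 1 ∧ 2 * p + 1 < 2 ^ p - 1 ∧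
      1 < 2 ^ p - 1 ∧ ¬ (2 ^ p - 1).Prime := by
  haveI : Fact (2 * p + 1).Prime := ⟨hq⟩
  have hq8 : (2 * p + 1) % 8 = 7 := by omega
  have hsq : IsSquare (2 : ZMod (2 * p + 1)) := by
    rw [ZMod.exists_sq_eq_two_iff (by omega)]
    omega
  have h2ne : (2 : ZMod (2 * p + 1)) ≠ 0 := by
    have : ((2 : ℕ) : ZMod (2 * p + 1)) ≠ 0 := by
      rw [Ne, ZMod.natCast_eq_zero_iff]
      intro h
      have := Nat.le_of_dvd (by norm_num) h
      omega
    simpa using this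
  have heuler := (ZMod.euler_criterion _ h2ne).mp hsq
  have hdivhalf : (2 * p + 1) / 2 = p := by omega
  rw [hdivhalf] at heuler
  have hdvd : (2 * p + 1) ∣ 2 ^ p - 1 := by
    have h1 : ((2 ^ p - 1 : ℕ) : ZMod (2 * p + 1)) = 0 := by
      have hle : 1 ≤ 2 ^ p := Nat.one_le_two_pow
      push_cast [Nat.cast_sub hle]
      rw [heuler]; ring
    exact (ZMod.natCast_eq_zero_iff _ _).mp h1
  have hlt : 2 * p + 1 < 2 ^ p - 1 := aux_pow p (by omega)
  refine ⟨hdvd, hlt, by omega, fun hpr => ?_⟩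
  rcases (Nat.Prime.eq_one_or_self_of_dvd hpr _ hdvd) with h | h <;> omega
end

section
/- There exist a constant C > 0 and a real x_0 such that for all x ≥ x_0, the number of odd primes p ≤ x with ℓ(p) ≤ x^{2/5}/(log x)² is at most C·x^{4/5}. -/
open Finset in
lemma aux_card_primeFactors (m : ℕ) (hm : m ≠ 0) : 2 ^ m.primeFactors.card ≤ m := by
  calc 2 ^ m.primeFactors.card ≤ 2 ^ m.primeFactorsList.length := by
        apply Nat.pow_le_pow_right (by norm_num)
        exact List.toFinset_card_le m.primeFactorsList
    _ ≤ m.primeFactorsList.prod :=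
        List.pow_card_le_prod _ _ (fun x hx => (Nat.prime_of_mem_primeFactorsList hx).two_le)
    _ = m := Nat.prod_primeFactorsList hm

open Finset in
lemma aux_count (N : ℕ) :
    ((∏ d ∈ Finset.Icc 1 N, (2 ^ d - 1)).primeFactors.card) ≤ N ^ 2 := by
  set M := ∏ d ∈ Finset.Icc 1 N, (2 ^ d - 1) with hM
  have hM0 : M ≠ 0 := by
    rw [hM]
    apply Finset.prod_ne_zero_iff.mpr
    intro d hd
    have : 1 ≤ d := (Finset.mem_Icc.mp hd).1
    have : 2 ≤ 2 ^ d := by calc 2 = 2^1 := rfl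
                                _ ≤ 2 ^ d := Nat.pow_le_pow_right (by norm_num) this
    omega
  have h1 : 2 ^ M.primeFactors.card ≤ M := aux_card_primeFactors M hM0
  have h2 : M ≤ 2 ^ (N ^ 2) := by
    calc M ≤ ∏ d ∈ Finset.Icc 1 N, 2 ^ d := Finset.prod_le_prod (fun _ _ => Nat.zero_le _)
              (fun d _ => Nat.sub_le _ _)
      _ = 2 ^ (∑ d ∈ Finset.Icc 1 N, d) := by rw [Finset.prod_pow_eq_pow_sum]
      _ ≤ 2 ^ (N ^ 2) := by
          apply Nat.pow_le_pow_right (by norm_num)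
          calc ∑ d ∈ Finset.Icc 1 N, d ≤ ∑ _d ∈ Finset.Icc 1 N, N := by
                apply Finset.sum_le_sum; intro d hd; exact (Finset.mem_Icc.mp hd).2
            _ ≤ N ^ 2 := by simp only [Finset.sum_const, Nat.card_Icc, smul_eq_mul, sq]; rw [Nat.add_sub_cancel]
  exact Nat.pow_le_pow_iff_right (le_refl 2) |>.mp (h1.trans h2)

/-- There are `C > 0` and `x₀` such that for all `x ≥ x₀`, the number of odd primes `p ≤ x`
with `ℓ(p) ≤ x^(2/5)/(log x)²` is at most `C·x^(4/5)`, where `ℓ(p)` is the multiplicative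
order of `2` modulo `p`. -/
theorem stmt_15 :
    ∃ C : ℝ, 0 < C ∧ ∃ x₀ : ℝ, ∀ x : ℝ, x₀ ≤ x →
      ({p : ℕ | p.Prime ∧ Odd p ∧ (p : ℝ) ≤ x ∧
        (orderOf (2 : ZMod p) : ℝ) ≤ x ^ ((2 : ℝ) / 5) / (Real.log x) ^ 2}.ncard : ℝ) ≤
        C * x ^ ((4 : ℝ) / 5) := by
  refine ⟨1, one_pos, 3, fun x hx => ?_⟩
  have hx0 : (0 : ℝ) < x := by linarith
  have hlog1 : (1 : ℝ) ≤ Real.log x := by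
    rw [show (1:ℝ) = Real.log (Real.exp 1) by simp]
    apply Real.log_le_log (Real.exp_pos 1)
    calc Real.exp 1 ≤ 3 := by
          have := Real.exp_one_lt_d9; linarith
      _ ≤ x := hx
  set T : ℝ := x ^ ((2 : ℝ) / 5) / (Real.log x) ^ 2 with hT
  have hT0 : 0 ≤ T := by
    apply div_nonneg (Real.rpow_nonneg hx0.le _) (sq_nonneg _)
  set N : ℕ := ⌊T⌋₊ with hN
  set M : ℕ := ∏ d ∈ Finset.Icc 1 N, (2 ^ d - 1) with hM
  have hM0 : M ≠ 0 := by
    rw [hM]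
    apply Finset.prod_ne_zero_iff.mpr
    intro d hd
    have h1 : 1 ≤ d := (Finset.mem_Icc.mp hd).1
    have : 2 ≤ 2 ^ d := by calc 2 = 2^1 := rfl
                                _ ≤ 2 ^ d := Nat.pow_le_pow_right (by norm_num) h1
    omega
  have hsub : {p : ℕ | p.Prime ∧ Odd p ∧ (p : ℝ) ≤ x ∧
      (orderOf (2 : ZMod p) : ℝ) ≤ T} ⊆ ↑M.primeFactors := by
    rintro p ⟨hp, hodd, -, hord⟩
    haveI : Fact p.Prime := ⟨hp⟩
    set d : ℕ := orderOf (2 : ZMod p) with hd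
    have h2ne : (2 : ZMod p) ≠ 0 := by
      have hp2 : p ≠ 2 := by rintro rfl; exact (Nat.not_odd_iff_even.mpr (by norm_num)) hodd
      intro h
      have : ((2 : ℕ) : ZMod p) = 0 := by exact_mod_cast h
      rw [ZMod.natCast_eq_zero_iff] at this
      exact hp2 ((Nat.prime_dvd_prime_iff_eq hp Nat.prime_two).mp this)
    have hunit : IsUnit (2 : ZMod p) := isUnit_iff_ne_zero.mpr h2ne
    have hd1 : 1 ≤ d := by
      rw [hd, ← hunit.unit_spec, orderOf_units]
      exact orderOf_pos _
    have hdN : d ≤ N := Nat.le_floor (by exact_mod_cast hord)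
    have hdvd : p ∣ 2 ^ d - 1 := by
      have h1 : (2 : ZMod p) ^ d = 1 := pow_orderOf_eq_one _
      have h2 : ((2 ^ d - 1 : ℕ) : ZMod p) = 0 := by
        have hle : 1 ≤ 2 ^ d := Nat.one_le_two_pow
        push_cast [hle]
        rw [h1]; ring
      exact (ZMod.natCast_eq_zero_iff _ _).mp h2
    have hpM : p ∣ M := hdvd.trans (Finset.dvd_prod_of_mem _ (Finset.mem_Icc.mpr ⟨hd1, hdN⟩))
    exact Nat.mem_primeFactors.mpr ⟨hp, hpM, hM0⟩
  have hfin : (↑M.primeFactors : Set ℕ).Finite := M.primeFactors.finite_toSet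
  have hcard : ({p : ℕ | p.Prime ∧ Odd p ∧ (p : ℝ) ≤ x ∧
      (orderOf (2 : ZMod p) : ℝ) ≤ T}.ncard) ≤ M.primeFactors.card := by
    rw [← Set.ncard_coe_finset]
    exact Set.ncard_le_ncard hsub hfin
  have hN2 : (M.primeFactors.card : ℝ) ≤ (N : ℝ) ^ 2 := by
    exact_mod_cast aux_count N
  have hNT : (N : ℝ) ≤ T := Nat.floor_le hT0
  have hT2 : T ^ 2 ≤ x ^ ((4 : ℝ) / 5) := by
    rw [hT, div_pow, ← Real.rpow_natCast (x ^ ((2:ℝ)/5)) 2, ← Real.rpow_mul hx0.le]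
    have h45 : (2:ℝ)/5 * ((2:ℕ):ℝ) = 4/5 := by norm_num
    rw [h45]
    have h2 : (1:ℝ) ≤ Real.log x ^ 2 := by nlinarith
    have hden : (1:ℝ) ≤ (Real.log x ^ 2) ^ 2 := by nlinarith
    exact div_le_self (Real.rpow_nonneg hx0.le _) hden
  calc (({p : ℕ | p.Prime ∧ Odd p ∧ (p : ℝ) ≤ x ∧
        (orderOf (2 : ZMod p) : ℝ) ≤ T}.ncard : ℝ)) ≤ (M.primeFactors.card : ℝ) := by
        exact_mod_cast hcard
    _ ≤ (N : ℝ) ^ 2 := hN2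
    _ ≤ T ^ 2 := by nlinarith
    _ ≤ x ^ ((4:ℝ)/5) := hT2
    _ = 1 * x ^ ((4:ℝ)/5) := by ring
end

section
/- For every real z ≥ 1, the sum of (n/φ(n))² over all positive integers n ≤ z is less than 4.5·z. -/
/-!
Since `n / φ n = ∏_{p ∣ n} p / (p - 1)`, we have `(n / φ n)² = ∏_{p ∣ n} (1 + c p)` with
`c p = (p / (p - 1))² - 1 = (2p - 1) / (p - 1)²`. Expanding the product into a sum over sets `S` of
primes and counting the `n ≤ N` divisible by `∏ S` gives
`∑_{n ≤ N} (n / φ n)² = ∑_S (∏_{p ∈ S} c p) ⌊N / ∏ S⌋ ≤ N ∏_{p ≤ N} (1 + c p / p)`.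
The factors with `p ≤ 100` multiply to at most `4.42`. For odd `p = 2k + 1` one has
`c p / p ≤ 1 / (2k²)`, so the primes `p > 100` have `∑ c p / p ≤ 1/98` and contribute a factor at
most `(1 - 1/98)⁻¹ = 98/97`; finally `4.42 · 98/97 < 4.5`.
-/
open Finset
open scoped Nat

noncomputable def sqRatioExcess (p : ℕ) : ℝ := ((p : ℝ) / (p - 1)) ^ 2 - 1

lemma sqRatioExcess_nonneg {p : ℕ} (hp : 1 < p) : 0 ≤ sqRatioExcess p := by
  have hp' : (1 : ℝ) < p := by exact_mod_cast hp
  have : 1 ≤ (p : ℝ) / (p - 1) := by rw [le_div_iff₀ (by linarith)]; linarith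
  rw [sqRatioExcess, sub_nonneg]
  exact one_le_pow₀ this

lemma sqRatioExcess_div_nonneg {p : ℕ} (hp : 1 < p) : 0 ≤ sqRatioExcess p / p :=
  div_nonneg (sqRatioExcess_nonneg hp) p.cast_nonneg

lemma sqRatioExcess_div_le {k : ℕ} (hk : k ≠ 0) :
    sqRatioExcess (2 * k + 1) / (2 * k + 1 : ℕ) ≤ ((k : ℝ) ^ 2)⁻¹ / 2 := by
  have hk' : (1 : ℝ) ≤ k := by exact_mod_cast Nat.one_le_iff_ne_zero.mpr hk
  have hc : sqRatioExcess (2 * k + 1) = (4 * k + 1) / (4 * k ^ 2) := by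
    rw [sqRatioExcess]
    push_cast
    field_simp
    ring
  rw [hc, div_le_iff₀ (by positivity)]
  push_cast
  field_simp
  nlinarith

lemma Nat.div_totient_eq_prod {n : ℕ} (hn : n ≠ 0) :
    (n : ℝ) / φ n = ∏ p ∈ n.primeFactors, (p : ℝ) / (p - 1) := by
  have h := congrArg (Rat.cast : ℚ → ℝ) (Nat.totient_eq_mul_prod_factors n)
  push_cast at h
  rw [h, div_mul_cancel_left₀ (by exact_mod_cast hn), ← prod_inv_distrib]
  refine prod_congr rfl fun p hp => ?_
  have hp : (1 : ℝ) < p := by exact_mod_cast (Nat.prime_of_mem_primeFactors hp).one_lt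
  field_simp

lemma Nat.sq_div_totient_eq_prod {n : ℕ} (hn : n ≠ 0) :
    ((n : ℝ) / φ n) ^ 2 = ∏ p ∈ n.primeFactors, (1 + sqRatioExcess p) := by
  simp [Nat.div_totient_eq_prod hn, sqRatioExcess, prod_pow]

lemma Nat.card_filter_subset_primeFactors (N : ℕ) {S : Finset ℕ} (hS : ∀ p ∈ S, p.Prime) :
    #{n ∈ Icc 1 N | S ⊆ n.primeFactors} = N / ∏ p ∈ S, p := by
  rw [← Nat.Ioc_filter_dvd_card_eq_div, ← Icc_add_one_left_eq_Ioc]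
  refine congrArg card (filter_congr fun n hn => ⟨fun h => ?_, fun h p hp => ?_⟩)
  · exact prod_primes_dvd n (fun p hp => (hS p hp).prime)
      fun p hp => Nat.dvd_of_mem_primeFactors (h hp)
  · exact Nat.mem_primeFactors.mpr
      ⟨hS p hp, (dvd_prod_of_mem _ hp).trans h, Nat.one_le_iff_ne_zero.mp (mem_Icc.mp hn).1⟩

lemma Nat.sum_Icc_prod_primeFactors_one_add {R : Type*} [CommSemiring R] (f : ℕ → R) (N : ℕ) :
    ∑ n ∈ Icc 1 N, ∏ p ∈ n.primeFactors, (1 + f p) =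
      ∑ S ∈ (primesLE N).powerset, ((N / ∏ p ∈ S, p : ℕ) : R) * ∏ p ∈ S, f p := by
  simp_rw [prod_one_add]
  rw [sum_comm' (t' := (primesLE N).powerset) (s' := fun S => {n ∈ Icc 1 N | S ⊆ n.primeFactors})]
  · refine sum_congr rfl fun S hS => ?_
    rw [sum_const, card_filter_subset_primeFactors N
      fun p hp => Nat.prime_of_mem_primesLE (mem_powerset.mp hS hp), nsmul_eq_mul]
  · intro n S
    simp only [mem_Icc, mem_powerset, mem_filter]
    refine ⟨fun ⟨hn, hS⟩ => ⟨⟨hn, hS⟩, hS.trans fun p hp => ?_⟩, fun ⟨⟨hn, hS⟩, _⟩ => ⟨hn, hS⟩⟩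
    exact Nat.mem_primesLE.mpr ⟨Nat.le_of_mem_primeFactors hp |>.trans hn.2,
      Nat.prime_of_mem_primeFactors hp⟩

lemma Nat.sum_Icc_prod_primeFactors_one_add_le (f : ℕ → ℝ) (hf : ∀ p, p.Prime → 0 ≤ f p)
    (N : ℕ) : ∑ n ∈ Icc 1 N, ∏ p ∈ n.primeFactors, (1 + f p) ≤
      N * ∏ p ∈ primesLE N, (1 + f p / p) := by
  rw [sum_Icc_prod_primeFactors_one_add, prod_one_add, mul_sum]
  refine sum_le_sum fun S hS => ?_
  have hSp : ∀ p ∈ S, p.Prime := fun p hp => Nat.prime_of_mem_primesLE (mem_powerset.mp hS hp)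
  calc ((N / ∏ p ∈ S, p : ℕ) : ℝ) * ∏ p ∈ S, f p
      ≤ (N / ∏ p ∈ S, (p : ℝ)) * ∏ p ∈ S, f p := by
        gcongr
        · exact prod_nonneg fun p hp => hf p (hSp p hp)
        · rw [← Nat.cast_prod]; exact Nat.cast_div_le
    _ = N * ∏ p ∈ S, f p / p := by rw [prod_div_distrib]; ring

lemma one_sub_sum_mul_prod_one_add_le_one {ι : Type*} (s : Finset ι) {x : ι → ℝ}
    (hx : ∀ i ∈ s, 0 ≤ x i) : (1 - ∑ i ∈ s, x i) * ∏ i ∈ s, (1 + x i) ≤ 1 := by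
  classical
  induction s using Finset.induction_on with
  | empty => simp
  | @insert a s ha ih =>
    rw [sum_insert ha, prod_insert ha]
    have hxa : 0 ≤ x a := hx a (mem_insert_self a s)
    have hxs : ∀ i ∈ s, 0 ≤ x i := fun i hi => hx i (mem_insert_of_mem hi)
    have hP : 0 ≤ ∏ i ∈ s, (1 + x i) := prod_nonneg fun i hi => by linarith [hxs i hi]
    have hu : 0 ≤ ∑ i ∈ s, x i := sum_nonneg hxs
    -- `(1 - a - u) (1 + a) = (1 - u) - a (a + u)`
    nlinarith [ih hxs, mul_nonneg (mul_nonneg hxa (add_nonneg hxa hu)) hP]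

lemma sum_inv_sq_le_of_lt {s : Finset ℕ} {m : ℕ} (hm : m ≠ 0) (hs : ∀ k ∈ s, m < k) :
    ∑ k ∈ s, ((k : ℝ) ^ 2)⁻¹ ≤ (m : ℝ)⁻¹ := by
  set M := max m (s.sup id)
  have hsub : s ⊆ Ioc m M := fun k hk =>
    mem_Ioc.mpr ⟨hs k hk, le_max_of_le_right (le_sup (f := id) hk)⟩
  calc ∑ k ∈ s, ((k : ℝ) ^ 2)⁻¹ ≤ ∑ k ∈ Ioc m M, ((k : ℝ) ^ 2)⁻¹ :=
        sum_le_sum_of_subset_of_nonneg hsub fun _ _ _ => by positivity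
    _ ≤ (m : ℝ)⁻¹ - (M : ℝ)⁻¹ := sum_Ioc_inv_sq_le_sub hm (le_max_left _ _)
    _ ≤ (m : ℝ)⁻¹ := sub_le_self _ (by positivity)

lemma sum_sqRatioExcess_div_le {s : Finset ℕ} {m : ℕ} (hm : m ≠ 0)
    (hs : ∀ p ∈ s, Odd p ∧ 2 * m + 1 < p) :
    ∑ p ∈ s, sqRatioExcess p / p ≤ (m : ℝ)⁻¹ / 2 := by
  have hp : ∀ p ∈ s, 2 * (p / 2) + 1 = p := fun p hp =>
    Nat.two_mul_div_two_add_one_of_odd (hs p hp).1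
  have hlt : ∀ p ∈ s, m < p / 2 := fun p hp => by have := (hs p hp).2; omega
  calc ∑ p ∈ s, sqRatioExcess p / p
      = ∑ p ∈ s, sqRatioExcess (2 * (p / 2) + 1) / (2 * (p / 2) + 1 : ℕ) :=
        sum_congr rfl fun p h => by rw [hp p h]
    _ ≤ ∑ p ∈ s, (((p / 2 : ℕ) : ℝ) ^ 2)⁻¹ / 2 :=
        sum_le_sum fun p h => sqRatioExcess_div_le (by have := hlt p h; omega)
    _ = ∑ k ∈ s.image (· / 2), (((k : ℕ) : ℝ) ^ 2)⁻¹ / 2 := by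
        rw [sum_image fun p h q h' hpq => by rw [← hp p h, ← hp q h', show p / 2 = q / 2 from hpq]]
    _ ≤ (m : ℝ)⁻¹ / 2 := by
        rw [← sum_div]
        gcongr
        exact sum_inv_sq_le_of_lt hm fun k hk => by
          obtain ⟨p, h, rfl⟩ := mem_image.mp hk
          exact hlt p h

lemma prod_primesLE_100_one_add_sqRatioExcess_div_le :
    ∏ p ∈ Nat.primesLE 100, (1 + sqRatioExcess p / p) ≤ 4.42 := by
  rw [show Nat.primesLE 100 = {2, 3, 5, 7, 11, 13, 17, 19, 23, 29, 31, 37, 41, 43, 47, 53, 59, 61,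
    67, 71, 73, 79, 83, 89, 97} by decide]
  norm_num [sqRatioExcess]

lemma prod_one_add_sqRatioExcess_div_le {s : Finset ℕ} (hs : ∀ p ∈ s, p.Prime) :
    ∏ p ∈ s, (1 + sqRatioExcess p / p) ≤ 4.42 * (98 / 97) := by
  set L := {p ∈ s | 100 < p}
  have hsub : s ⊆ Nat.primesLE 100 ∪ L := fun p hp => by
    by_cases h : p ≤ 100
    · exact mem_union_left _ (Nat.mem_primesLE.mpr ⟨h, hs p hp⟩)
    · exact mem_union_right _ (mem_filter.mpr ⟨hp, by omega⟩)
  have hdisj : Disjoint (Nat.primesLE 100) L := disjoint_left.mpr fun p hp hpL =>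
    absurd (mem_filter.mp hpL).2 (not_lt.mpr (Nat.mem_primesLE.mp hp).1)
  have hprime : ∀ p ∈ Nat.primesLE 100 ∪ L, p.Prime := fun p hp => by
    rcases mem_union.mp hp with h | h
    exacts [Nat.prime_of_mem_primesLE h, hs p (mem_filter.mp h).1]
  have hterm : ∀ p ∈ Nat.primesLE 100 ∪ L, 0 ≤ sqRatioExcess p / p := fun p hp =>
    sqRatioExcess_div_nonneg (hprime p hp).one_lt
  have hL : ∏ p ∈ L, (1 + sqRatioExcess p / p) ≤ 98 / 97 := by
    have hLterm : ∀ p ∈ L, 0 ≤ sqRatioExcess p / p := fun p hp => hterm p (mem_union_right _ hp)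
    have hsum : ∑ p ∈ L, sqRatioExcess p / p ≤ (49 : ℝ)⁻¹ / 2 := by
      refine sum_sqRatioExcess_div_le (m := 49) (by norm_num) fun p hp => ?_
      obtain ⟨hps, h100⟩ := mem_filter.mp hp
      exact ⟨(hs p hps).odd_of_ne_two (by omega), by omega⟩
    have hmul := one_sub_sum_mul_prod_one_add_le_one L hLterm
    have hP : 0 ≤ ∏ p ∈ L, (1 + sqRatioExcess p / p) :=
      prod_nonneg fun p hp => by linarith [hLterm p hp]
    nlinarith
  calc ∏ p ∈ s, (1 + sqRatioExcess p / p)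
      ≤ ∏ p ∈ Nat.primesLE 100 ∪ L, (1 + sqRatioExcess p / p) :=
        prod_le_prod_of_subset_of_one_le hsub (fun p hp => by linarith [hterm p (hsub hp)])
          fun p hp _ => by linarith [hterm p hp]
    _ = (∏ p ∈ Nat.primesLE 100, (1 + sqRatioExcess p / p)) *
          ∏ p ∈ L, (1 + sqRatioExcess p / p) :=
        prod_union hdisj
    _ ≤ 4.42 * (98 / 97) :=
        mul_le_mul prod_primesLE_100_one_add_sqRatioExcess_div_le hL
          (prod_nonneg fun p hp => by linarith [hterm p (mem_union_right _ hp)]) (by norm_num)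

/-- For every real `z ≥ 1`, `∑_{n ≤ z} (n/φ(n))² < 4.5·z`. -/
theorem stmt_16 (z : ℝ) (hz : 1 ≤ z) :
    ∑ n ∈ Finset.Icc 1 ⌊z⌋₊, ((n : ℝ) / (Nat.totient n : ℝ)) ^ 2 < 4.5 * z := by
  have hN : (⌊z⌋₊ : ℝ) ≤ z := Nat.floor_le (by linarith)
  have hprimes : ∀ p ∈ Nat.primesLE ⌊z⌋₊, p.Prime := fun p hp => Nat.prime_of_mem_primesLE hp
  calc ∑ n ∈ Icc 1 ⌊z⌋₊, ((n : ℝ) / φ n) ^ 2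
      = ∑ n ∈ Icc 1 ⌊z⌋₊, ∏ p ∈ n.primeFactors, (1 + sqRatioExcess p) :=
        sum_congr rfl fun n hn =>
          Nat.sq_div_totient_eq_prod (Nat.one_le_iff_ne_zero.mp (mem_Icc.mp hn).1)
    _ ≤ ⌊z⌋₊ * ∏ p ∈ Nat.primesLE ⌊z⌋₊, (1 + sqRatioExcess p / p) :=
        Nat.sum_Icc_prod_primeFactors_one_add_le _ (fun p hp => sqRatioExcess_nonneg hp.one_lt) _
    _ ≤ z * (4.42 * (98 / 97)) :=
        mul_le_mul hN (prod_one_add_sqRatioExcess_div_le hprimes)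
          (prod_nonneg fun p hp => by linarith [sqRatioExcess_div_nonneg (hprimes p hp).one_lt])
          (by linarith)
    _ < 4.5 * z := by norm_num; linarith
end

section
/- For every real z ≥ 1 and every real δ > 0, the sum of 1/φ(n) over all positive integers n ≤ z with δ/2 < φ(n)/n ≤ δ is less than 9·δ·log(e·z). -/
open Finset

lemma st18_tail (f : ℕ → ℝ) (M₀ : ℕ) (hM₀ : 1 ≤ M₀) (hf : ∀ m, 0 ≤ f m)
    (h : ∀ m, M₀ < m → f m ≤ 1 / (m:ℝ)^2) (M : ℕ) :
    ∑ m ∈ Finset.Icc 1 M, f m ≤ (∑ m ∈ Finset.Icc 1 M₀, f m) + 1/(M₀:ℝ) := by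
  have h0 : (0:ℝ) < (M₀:ℝ) := by exact_mod_cast hM₀
  rcases le_or_gt M M₀ with hMM | hMM
  · have hsub : Finset.Icc 1 M ⊆ Finset.Icc 1 M₀ := Finset.Icc_subset_Icc_right hMM
    have h1 := Finset.sum_le_sum_of_subset_of_nonneg hsub (fun i _ _ => hf i)
    have h2 : (0:ℝ) < 1/(M₀:ℝ) := by positivity
    linarith
  · have key : ∀ M, M₀ ≤ M → ∑ m ∈ Finset.Icc 1 M, f m ≤
        (∑ m ∈ Finset.Icc 1 M₀, f m) + (1/(M₀:ℝ) - 1/(M:ℝ)) := by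
      intro M hM
      induction M, hM using Nat.le_induction with
      | base => simp
      | succ M hM ih =>
        rw [Finset.sum_Icc_succ_top (by omega)]
        have hMpos : (0:ℝ) < (M:ℝ) := by
          have : 0 < M := by omega
          exact_mod_cast this
        have h1 : f (M+1) ≤ 1/((M:ℝ)+1)^2 := by
          have := h (M+1) (by omega); push_cast at this; exact this
        have h2 : 1/((M:ℝ)+1)^2 ≤ 1/(M:ℝ) - 1/((M:ℝ)+1) := by
          rw [div_sub_div _ _ (ne_of_gt hMpos) (by positivity),
            div_le_div_iff₀ (by positivity) (by positivity)]
          nlinarith [hMpos]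
        push_cast
        linarith
    have hMcast : (0:ℝ) < (M:ℝ) := by
      have : 0 < M := by omega
      exact_mod_cast this
    have h3 : (0:ℝ) < 1/(M:ℝ) := by positivity
    linarith [key M hMM.le]

lemma st18_totient_div (n : ℕ) (hn : n ≠ 0) :
    (n : ℝ) / (Nat.totient n : ℝ) ≤ ∑ d ∈ n.divisors, 1 / (Nat.totient d : ℝ) := by
  have hφ : (0:ℝ) < (Nat.totient n : ℝ) := by
    exact_mod_cast Nat.totient_pos.mpr (Nat.pos_of_ne_zero hn)
  rw [div_le_iff₀ hφ]
  have h1 : (n:ℝ) = ∑ d ∈ n.divisors, (Nat.totient (n / d) : ℝ) := by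
    rw_mod_cast [Nat.sum_div_divisors n Nat.totient]
    exact_mod_cast (Nat.sum_totient n).symm
  rw [h1, Finset.sum_mul]
  refine Finset.sum_le_sum fun d hd => ?_
  rw [Nat.mem_divisors] at hd
  have hd1 : d ≠ 0 := by rintro rfl; exact hd.2 (Nat.eq_zero_of_zero_dvd hd.1)
  have hφd : (0:ℝ) < (Nat.totient d : ℝ) := by
    exact_mod_cast Nat.totient_pos.mpr (Nat.pos_of_ne_zero hd1)
  rw [one_div, inv_mul_eq_div, le_div_iff₀ hφd]
  have key : Nat.totient (n / d) * Nat.totient d ≤ Nat.totient n := by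
    have := Nat.totient_super_multiplicative (n / d) d
    rwa [Nat.div_mul_cancel hd.1] at this
  exact_mod_cast key

lemma st18_z2 (M : ℕ) : ∑ m ∈ Finset.Icc 1 M, 1/(m:ℝ)^2 ≤ 1.65 := by
  have htail := st18_tail (fun m => 1/(m:ℝ)^2) 30 (by norm_num) (fun m => by positivity)
    (fun m hm => le_rfl) M
  have hpart : ∑ m ∈ Finset.Icc (1:ℕ) 30, 1/(m:ℝ)^2 ≤ 1.6166 := by
    rw [← Finset.Ico_add_one_right_eq_Icc, Finset.sum_Ico_eq_sum_range]
    norm_num [Finset.sum_range_succ]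
  norm_num at htail hpart ⊢
  linarith

lemma st18_L (M : ℕ) : ∑ d ∈ Finset.Icc 1 M, 1/((d:ℝ)^2 * (Nat.totient d : ℝ)) ≤ 1.48 := by
  have htail := st18_tail (fun d => 1/((d:ℝ)^2 * (Nat.totient d : ℝ))) 10 (by norm_num)
    (fun m => by positivity)
    (fun m hm => by
      have hφ : (1:ℝ) ≤ (Nat.totient m : ℝ) := by
        exact_mod_cast Nat.totient_pos.mpr (by omega)
      have hm2 : (0:ℝ) < (m:ℝ)^2 := by
        have : 0 < m := by omega
        positivity
      rw [div_le_div_iff₀ (by nlinarith) (by positivity)]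
      nlinarith) M
  have hpart : ∑ d ∈ Finset.Icc (1:ℕ) 10, 1/((d:ℝ)^2 * (Nat.totient d : ℝ)) ≤ 1.38 := by
    rw [← Finset.Ico_add_one_right_eq_Icc, Finset.sum_Ico_eq_sum_range]
    have t1 : Nat.totient 1 = 1 := by decide
    have t2 : Nat.totient 2 = 1 := by decide
    have t3 : Nat.totient 3 = 2 := by decide
    have t4 : Nat.totient 4 = 2 := by decide
    have t5 : Nat.totient 5 = 4 := by decide
    have t6 : Nat.totient 6 = 2 := by decide
    have t7 : Nat.totient 7 = 6 := by decide
    have t8 : Nat.totient 8 = 4 := by decide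
    have t9 : Nat.totient 9 = 6 := by decide
    have t10 : Nat.totient 10 = 4 := by decide
    norm_num [Finset.sum_range_succ, t1,t2,t3,t4,t5,t6,t7,t8,t9,t10]
  norm_num at htail hpart ⊢
  linarith

lemma st18_mult (N d : ℕ) (hd : 1 ≤ d) (f : ℕ → ℝ) :
    ∑ n ∈ (Finset.Icc 1 N).filter (fun n => d ∣ n), f n
      = ∑ k ∈ Finset.Icc 1 (N / d), f (d * k) := by
  refine Finset.sum_nbij' (fun n => n / d) (fun k => d * k) ?_ ?_ ?_ ?_ ?_
  · intro a ha
    simp only [Finset.mem_filter, Finset.mem_Icc] at ha ⊢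
    obtain ⟨⟨h1, h2⟩, h3⟩ := ha
    exact ⟨Nat.one_le_div_iff (by omega) |>.mpr (Nat.le_of_dvd (by omega) h3),
      Nat.div_le_div_right h2⟩
  · intro k hk
    simp only [Finset.mem_filter, Finset.mem_Icc] at hk ⊢
    obtain ⟨h1, h2⟩ := hk
    refine ⟨⟨by nlinarith, ?_⟩, Dvd.intro k rfl⟩
    calc d * k ≤ d * (N / d) := Nat.mul_le_mul_left d h2
      _ ≤ N := Nat.mul_div_le N d
  · intro a ha
    simp only [Finset.mem_filter, Finset.mem_Icc] at ha
    exact Nat.mul_div_cancel' ha.2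
  · intro k hk
    exact Nat.mul_div_cancel_left k (by omega)
  · intro a ha
    simp only [Finset.mem_filter, Finset.mem_Icc] at ha
    rw [Nat.mul_div_cancel' ha.2]

lemma st18_K (M : ℕ) :
    ∑ m ∈ Finset.Icc 1 M, 1/((m:ℝ) * (Nat.totient m : ℝ)) ≤ 2.442 := by
  have step1 : ∑ m ∈ Finset.Icc 1 M, 1/((m:ℝ) * (Nat.totient m : ℝ))
      ≤ ∑ m ∈ Finset.Icc 1 M, ∑ d ∈ m.divisors, (1/(m:ℝ)^2) * (1/(Nat.totient d : ℝ)) := by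
    refine Finset.sum_le_sum fun m hm => ?_
    simp only [Finset.mem_Icc] at hm
    have hm0 : m ≠ 0 := by omega
    have hφ : (0:ℝ) < (Nat.totient m : ℝ) := by
      exact_mod_cast Nat.totient_pos.mpr (by omega)
    have hmp : (0:ℝ) < (m:ℝ) := by exact_mod_cast (by omega : 0 < m)
    have h1 := st18_totient_div m hm0
    calc 1/((m:ℝ) * (Nat.totient m : ℝ)) = (1/(m:ℝ)^2) * ((m:ℝ)/(Nat.totient m : ℝ)) := by
          field_simp
      _ ≤ (1/(m:ℝ)^2) * ∑ d ∈ m.divisors, 1/(Nat.totient d : ℝ) := by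
          apply mul_le_mul_of_nonneg_left h1 (by positivity)
      _ = ∑ d ∈ m.divisors, (1/(m:ℝ)^2) * (1/(Nat.totient d : ℝ)) := Finset.mul_sum ..
  have step2 : ∑ m ∈ Finset.Icc 1 M, ∑ d ∈ m.divisors, (1/(m:ℝ)^2) * (1/(Nat.totient d : ℝ))
      = ∑ d ∈ Finset.Icc 1 M, ∑ m ∈ (Finset.Icc 1 M).filter (fun m => d ∣ m),
          (1/(m:ℝ)^2) * (1/(Nat.totient d : ℝ)) := by
    refine Finset.sum_comm' ?_
    intro m d
    simp only [Finset.mem_Icc, Nat.mem_divisors, Finset.mem_filter]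
    constructor
    · rintro ⟨hm, hd, hm0⟩
      have hd0 : d ≠ 0 := by rintro rfl; exact hm0 (Nat.eq_zero_of_zero_dvd hd)
      have hdm : d ≤ m := Nat.le_of_dvd (by omega) hd
      exact ⟨⟨hm, hd⟩, by omega, by omega⟩
    · rintro ⟨⟨hm, hdvd⟩, hd⟩
      exact ⟨hm, hdvd, by omega⟩
  have step3 : ∀ d ∈ Finset.Icc 1 M, ∑ m ∈ (Finset.Icc 1 M).filter (fun m => d ∣ m),
        (1/(m:ℝ)^2) * (1/(Nat.totient d : ℝ))
      ≤ 1.65 * (1/((d:ℝ)^2 * (Nat.totient d : ℝ))) := by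
    intro d hd
    simp only [Finset.mem_Icc] at hd
    have hdp : (0:ℝ) < (d:ℝ) := by exact_mod_cast (by omega : 0 < d)
    have hφ : (0:ℝ) < (Nat.totient d : ℝ) := by
      exact_mod_cast Nat.totient_pos.mpr (by omega)
    rw [st18_mult M d (by omega)]
    have : ∀ k ∈ Finset.Icc 1 (M/d), (1/((d*k : ℕ):ℝ)^2) * (1/(Nat.totient d : ℝ))
        = (1/((d:ℝ)^2 * (Nat.totient d : ℝ))) * (1/(k:ℝ)^2) := by
      intro k hk
      push_cast
      field_simp
    rw [Finset.sum_congr rfl this, ← Finset.mul_sum]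
    have h2 := st18_z2 (M/d)
    have h3 : (0:ℝ) ≤ 1/((d:ℝ)^2 * (Nat.totient d : ℝ)) := by positivity
    calc (1/((d:ℝ)^2 * (Nat.totient d : ℝ))) * ∑ k ∈ Finset.Icc 1 (M/d), 1/(k:ℝ)^2
        ≤ (1/((d:ℝ)^2 * (Nat.totient d : ℝ))) * 1.65 := by
          apply mul_le_mul_of_nonneg_left h2 h3
      _ = 1.65 * (1/((d:ℝ)^2 * (Nat.totient d : ℝ))) := by ring
  calc ∑ m ∈ Finset.Icc 1 M, 1/((m:ℝ) * (Nat.totient m : ℝ))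
      ≤ ∑ d ∈ Finset.Icc 1 M, ∑ m ∈ (Finset.Icc 1 M).filter (fun m => d ∣ m),
          (1/(m:ℝ)^2) * (1/(Nat.totient d : ℝ)) := step2 ▸ step1
    _ ≤ ∑ d ∈ Finset.Icc 1 M, 1.65 * (1/((d:ℝ)^2 * (Nat.totient d : ℝ))) :=
        Finset.sum_le_sum step3
    _ = 1.65 * ∑ d ∈ Finset.Icc 1 M, 1/((d:ℝ)^2 * (Nat.totient d : ℝ)) :=
        (Finset.mul_sum ..).symm
    _ ≤ 1.65 * 1.48 := by
        have := st18_L M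
        nlinarith [st18_L M]
    _ ≤ 2.442 := by norm_num

lemma st18_harm (K : ℕ) : ∑ k ∈ Finset.Icc 1 K, 1/(k:ℝ) ≤ 1 + Real.log K := by
  have h := harmonic_le_one_add_log K
  rw [harmonic_eq_sum_Icc] at h
  push_cast at h
  simpa [one_div] using h

lemma st18_w (N d : ℕ) (hd : 1 ≤ d) :
    ∑ a ∈ (Finset.Icc 1 N).filter (fun a => d ∣ a), 1/((Nat.totient a : ℝ) * a)
      ≤ 2.442 * (1/((d:ℝ) * (Nat.totient d : ℝ))) := by
  rw [st18_mult N d hd]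
  have hφd : (0:ℝ) < (Nat.totient d : ℝ) := by
    exact_mod_cast Nat.totient_pos.mpr (by omega)
  have hdp : (0:ℝ) < (d:ℝ) := by exact_mod_cast (by omega : 0 < d)
  have hterm : ∀ k ∈ Finset.Icc 1 (N/d), 1/((Nat.totient (d*k) : ℝ) * ((d*k : ℕ):ℝ))
      ≤ (1/((d:ℝ) * (Nat.totient d : ℝ))) * (1/((k:ℝ) * (Nat.totient k : ℝ))) := by
    intro k hk
    simp only [Finset.mem_Icc] at hk
    have hkp : (0:ℝ) < (k:ℝ) := by exact_mod_cast (by omega : 0 < k)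
    have hφk : (0:ℝ) < (Nat.totient k : ℝ) := by
      exact_mod_cast Nat.totient_pos.mpr (by omega)
    have hsup : (Nat.totient d : ℝ) * (Nat.totient k : ℝ) ≤ (Nat.totient (d*k) : ℝ) := by
      exact_mod_cast Nat.totient_super_multiplicative d k
    have hle : ((Nat.totient d : ℝ) * (Nat.totient k : ℝ)) * ((d:ℝ) * (k:ℝ))
        ≤ (Nat.totient (d*k) : ℝ) * ((d*k : ℕ):ℝ) := by
      push_cast
      apply mul_le_mul_of_nonneg_right hsup (by positivity)
    calc 1/((Nat.totient (d*k) : ℝ) * ((d*k : ℕ):ℝ))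
        ≤ 1/(((Nat.totient d : ℝ) * (Nat.totient k : ℝ)) * ((d:ℝ) * (k:ℝ))) :=
          one_div_le_one_div_of_le (by positivity) hle
      _ = (1/((d:ℝ) * (Nat.totient d : ℝ))) * (1/((k:ℝ) * (Nat.totient k : ℝ))) := by
          field_simp
  calc ∑ k ∈ Finset.Icc 1 (N/d), 1/((Nat.totient (d*k) : ℝ) * ((d*k : ℕ):ℝ))
      ≤ ∑ k ∈ Finset.Icc 1 (N/d), (1/((d:ℝ) * (Nat.totient d : ℝ))) * (1/((k:ℝ) * (Nat.totient k : ℝ))) :=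
        Finset.sum_le_sum hterm
    _ = (1/((d:ℝ) * (Nat.totient d : ℝ))) * ∑ k ∈ Finset.Icc 1 (N/d), 1/((k:ℝ) * (Nat.totient k : ℝ)) :=
        (Finset.mul_sum ..).symm
    _ ≤ (1/((d:ℝ) * (Nat.totient d : ℝ))) * 2.442 := by
        apply mul_le_mul_of_nonneg_left (st18_K _) (by positivity)
    _ = 2.442 * (1/((d:ℝ) * (Nat.totient d : ℝ))) := by ring

lemma st18_H (z : ℝ) (hz : 1 ≤ z) (a b : ℕ) (ha : 1 ≤ a) (hb : 1 ≤ b) :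
    ∑ n ∈ (Finset.Icc 1 (Nat.floor z)).filter (fun n => a ∣ n ∧ b ∣ n), 1/(n:ℝ)
      ≤ (1/((Nat.lcm a b : ℕ):ℝ)) * (1 + Real.log z) := by
  set N := Nat.floor z with hN
  have hfil : (Finset.Icc 1 N).filter (fun n => a ∣ n ∧ b ∣ n)
      = (Finset.Icc 1 N).filter (fun n => Nat.lcm a b ∣ n) := by
    ext n
    simp [Finset.mem_filter, Nat.lcm_dvd_iff]
  have hL : 1 ≤ Nat.lcm a b := Nat.pos_of_ne_zero (Nat.lcm_ne_zero (by omega) (by omega))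
  set L := Nat.lcm a b with hLdef
  have hLp : (0:ℝ) < (L:ℝ) := by exact_mod_cast hL
  rw [hfil, st18_mult N L hL]
  have hterm : ∀ k ∈ Finset.Icc 1 (N/L), 1/(((L*k : ℕ)):ℝ) = (1/(L:ℝ)) * (1/(k:ℝ)) := by
    intro k hk
    push_cast
    rw [one_div, mul_inv, one_div, one_div]
  rw [Finset.sum_congr rfl hterm, ← Finset.mul_sum]
  have hlog : Real.log (N/L : ℕ) ≤ Real.log z := by
    rcases Nat.eq_zero_or_pos (N/L) with h0 | hpos
    · rw [h0]
      simpa using Real.log_nonneg hz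
    · apply Real.log_le_log (by exact_mod_cast hpos)
      calc ((N/L : ℕ):ℝ) ≤ (N:ℝ) := by exact_mod_cast Nat.div_le_self N L
        _ ≤ z := Nat.floor_le (by linarith)
  have h1 := st18_harm (N/L)
  have h2 : (0:ℝ) ≤ 1/(L:ℝ) := by positivity
  calc (1/(L:ℝ)) * ∑ k ∈ Finset.Icc 1 (N/L), 1/(k:ℝ)
      ≤ (1/(L:ℝ)) * (1 + Real.log (N/L : ℕ)) := mul_le_mul_of_nonneg_left h1 h2
    _ ≤ (1/(L:ℝ)) * (1 + Real.log z) := by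
        apply mul_le_mul_of_nonneg_left (by linarith) h2

lemma st18_B (z : ℝ) (hz : 1 ≤ z) :
    ∑ n ∈ Finset.Icc 1 (Nat.floor z),
        (1/(n:ℝ)) * (∑ d ∈ n.divisors, 1/(Nat.totient d : ℝ))^2
      ≤ 8.83 * (1 + Real.log z) := by
  set N := Nat.floor z with hN
  set S := Finset.Icc 1 N with hS
  set E := 1 + Real.log z with hE
  have hE1 : (1:ℝ) ≤ E := by
    have := Real.log_nonneg hz
    simp only [hE]; linarith
  set f : ℕ → ℝ := fun x => 1/(Nat.totient x : ℝ) with hf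
  set w : ℕ → ℝ := fun x => 1/((Nat.totient x : ℝ) * x) with hw
  set W : ℕ → ℝ := fun e => ∑ b ∈ S.filter (fun b => e ∣ b), w b with hW
  -- step 1: expand the square
  have hsq : ∀ n ∈ S, (1/(n:ℝ)) * (∑ d ∈ n.divisors, f d)^2
      = ∑ a ∈ n.divisors, ∑ b ∈ n.divisors, (1/(n:ℝ)) * (f a * f b) := by
    intro n _
    rw [sq, Finset.sum_mul_sum, Finset.mul_sum]
    refine Finset.sum_congr rfl fun a _ => ?_
    rw [Finset.mul_sum]
  rw [Finset.sum_congr rfl hsq]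
  -- step 2: swap n and a
  have hswap1 : ∑ n ∈ S, ∑ a ∈ n.divisors, (∑ b ∈ n.divisors, (1/(n:ℝ)) * (f a * f b))
      = ∑ a ∈ S, ∑ n ∈ S.filter (fun n => a ∣ n),
          (∑ b ∈ n.divisors, (1/(n:ℝ)) * (f a * f b)) := by
    refine Finset.sum_comm' ?_
    intro n a
    simp only [hS, Finset.mem_Icc, Nat.mem_divisors, Finset.mem_filter]
    constructor
    · rintro ⟨hn, ha, hn0⟩
      have ha0 : a ≠ 0 := by rintro rfl; exact hn0 (Nat.eq_zero_of_zero_dvd ha)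
      have ham : a ≤ n := Nat.le_of_dvd (by omega) ha
      exact ⟨⟨hn, ha⟩, by omega, by omega⟩
    · rintro ⟨⟨hn, ha⟩, haS⟩
      exact ⟨hn, ha, by omega⟩
  rw [hswap1]
  -- step 3: swap n and b (for fixed a)
  have hswap2 : ∀ a ∈ S, ∑ n ∈ S.filter (fun n => a ∣ n),
        (∑ b ∈ n.divisors, (1/(n:ℝ)) * (f a * f b))
      = ∑ b ∈ S, ∑ n ∈ S.filter (fun n => a ∣ n ∧ b ∣ n), (1/(n:ℝ)) * (f a * f b) := by
    intro a _
    refine Finset.sum_comm' ?_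
    intro n b
    simp only [hS, Finset.mem_Icc, Nat.mem_divisors, Finset.mem_filter]
    constructor
    · rintro ⟨⟨hn, ha⟩, hb, hn0⟩
      have hb0 : b ≠ 0 := by rintro rfl; exact hn0 (Nat.eq_zero_of_zero_dvd hb)
      have hbm : b ≤ n := Nat.le_of_dvd (by omega) hb
      exact ⟨⟨hn, ha, hb⟩, by omega, by omega⟩
    · rintro ⟨⟨hn, ha, hb⟩, hbS⟩
      exact ⟨⟨hn, ha⟩, hb, by omega⟩
  rw [Finset.sum_congr rfl hswap2]
  -- step 4: pointwise bound on the inner sum over n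
  have hpoint : ∀ a ∈ S, ∀ b ∈ S,
      ∑ n ∈ S.filter (fun n => a ∣ n ∧ b ∣ n), (1/(n:ℝ)) * (f a * f b)
        ≤ ∑ e ∈ (Nat.gcd a b).divisors, E * ((Nat.totient e : ℝ) * (w a * w b)) := by
    intro a haS b hbS
    simp only [hS, Finset.mem_Icc] at haS hbS
    have hap : (0:ℝ) < (a:ℝ) := by exact_mod_cast (by omega : 0 < a)
    have hbp : (0:ℝ) < (b:ℝ) := by exact_mod_cast (by omega : 0 < b)
    have hφa : (0:ℝ) < (Nat.totient a : ℝ) := by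
      exact_mod_cast Nat.totient_pos.mpr (by omega)
    have hφb : (0:ℝ) < (Nat.totient b : ℝ) := by
      exact_mod_cast Nat.totient_pos.mpr (by omega)
    have hfab : (0:ℝ) ≤ f a * f b := by positivity
    have step : ∑ n ∈ S.filter (fun n => a ∣ n ∧ b ∣ n), (1/(n:ℝ)) * (f a * f b)
        = (f a * f b) * ∑ n ∈ S.filter (fun n => a ∣ n ∧ b ∣ n), 1/(n:ℝ) := by
      rw [Finset.mul_sum]
      exact Finset.sum_congr rfl fun n _ => by ring
    rw [step]
    have hHb := st18_H z hz a b (by omega) (by omega)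
    have step2 : (f a * f b) * ∑ n ∈ S.filter (fun n => a ∣ n ∧ b ∣ n), 1/(n:ℝ)
        ≤ (f a * f b) * ((1/((Nat.lcm a b : ℕ):ℝ)) * E) :=
      mul_le_mul_of_nonneg_left hHb hfab
    refine step2.trans (le_of_eq ?_)
    -- (f a * f b) * ((1/lcm) * E) = ∑_e E * (φ e * (w a * w b))
    have hgl : ((Nat.gcd a b : ℕ):ℝ) * ((Nat.lcm a b : ℕ):ℝ) = (a:ℝ) * (b:ℝ) := by
      exact_mod_cast congrArg (Nat.cast : ℕ → ℝ) (Nat.gcd_mul_lcm a b)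
    have hgcdpos : 0 < Nat.gcd a b := Nat.gcd_pos_of_pos_left b (by omega)
    have hgp : (0:ℝ) < ((Nat.gcd a b : ℕ):ℝ) := by exact_mod_cast hgcdpos
    have hlcmpos : (0:ℝ) < ((Nat.lcm a b : ℕ):ℝ) := by
      have : 0 < Nat.lcm a b := Nat.pos_of_ne_zero (Nat.lcm_ne_zero (by omega) (by omega))
      exact_mod_cast this
    have hsumφ : ((Nat.gcd a b : ℕ):ℝ) = ∑ e ∈ (Nat.gcd a b).divisors, (Nat.totient e : ℝ) := by
      exact_mod_cast congrArg (Nat.cast : ℕ → ℝ) (Nat.sum_totient (Nat.gcd a b)).symm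
    have key : (f a * f b) * ((1/((Nat.lcm a b : ℕ):ℝ)) * E)
        = ((Nat.gcd a b : ℕ):ℝ) * (E * (w a * w b)) := by
      have hgcd_eq : ((Nat.gcd a b : ℕ):ℝ) = (a:ℝ) * b / ((Nat.lcm a b : ℕ):ℝ) := by
        rw [eq_div_iff (ne_of_gt hlcmpos)]; exact hgl
      simp only [hf, hw]
      rw [hgcd_eq]
      have h1 : (Nat.totient a : ℝ) ≠ 0 := ne_of_gt hφa
      have h2 : (Nat.totient b : ℝ) ≠ 0 := ne_of_gt hφb
      have h3 : ((Nat.lcm a b : ℕ):ℝ) ≠ 0 := ne_of_gt hlcmpos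
      have h4 : (a:ℝ) ≠ 0 := ne_of_gt hap
      have h5 : (b:ℝ) ≠ 0 := ne_of_gt hbp
      field_simp
    rw [key, hsumφ, Finset.sum_mul]
    exact Finset.sum_congr rfl fun e _ => by ring
  have hb1 : ∑ a ∈ S, ∑ b ∈ S, ∑ n ∈ S.filter (fun n => a ∣ n ∧ b ∣ n), (1/(n:ℝ)) * (f a * f b)
      ≤ ∑ a ∈ S, ∑ b ∈ S, ∑ e ∈ (Nat.gcd a b).divisors, E * ((Nat.totient e : ℝ) * (w a * w b)) :=
    Finset.sum_le_sum fun a ha => Finset.sum_le_sum fun b hb => hpoint a ha b hb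
  refine hb1.trans ?_
  -- swap b and e (for fixed a)
  have hswap3 : ∀ a ∈ S, ∑ b ∈ S, ∑ e ∈ (Nat.gcd a b).divisors,
        E * ((Nat.totient e : ℝ) * (w a * w b))
      = ∑ e ∈ S.filter (fun e => e ∣ a), ∑ b ∈ S.filter (fun b => e ∣ b),
          E * ((Nat.totient e : ℝ) * (w a * w b)) := by
    intro a haS
    simp only [hS, Finset.mem_Icc] at haS
    refine Finset.sum_comm' ?_
    intro b e
    simp only [hS, Finset.mem_Icc, Nat.mem_divisors, Finset.mem_filter]
    constructor
    · rintro ⟨hb, he, hg0⟩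
      have hea : e ∣ a := he.trans (Nat.gcd_dvd_left a b)
      have heb : e ∣ b := he.trans (Nat.gcd_dvd_right a b)
      have he0 : e ≠ 0 := by rintro rfl; exact hg0 (Nat.eq_zero_of_zero_dvd he)
      have hlea : e ≤ a := Nat.le_of_dvd (by omega) hea
      exact ⟨⟨hb, heb⟩, ⟨by omega, by omega⟩, hea⟩
    · rintro ⟨⟨hb, heb⟩, ⟨he, hea⟩⟩
      refine ⟨hb, Nat.dvd_gcd hea heb, ?_⟩
      have : 0 < Nat.gcd a b := Nat.gcd_pos_of_pos_left b (by omega)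
      omega
  rw [Finset.sum_congr rfl hswap3]
  -- collapse the inner sum over b into W
  have hcoll : ∀ a ∈ S, ∑ e ∈ S.filter (fun e => e ∣ a), ∑ b ∈ S.filter (fun b => e ∣ b),
        E * ((Nat.totient e : ℝ) * (w a * w b))
      = ∑ e ∈ S.filter (fun e => e ∣ a), E * (Nat.totient e : ℝ) * W e * w a := by
    intro a _
    refine Finset.sum_congr rfl fun e _ => ?_
    have hh : ∀ b ∈ S.filter (fun b => e ∣ b),
        E * ((Nat.totient e : ℝ) * (w a * w b)) = (E * (Nat.totient e : ℝ) * w a) * w b :=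
      fun b _ => by ring
    rw [Finset.sum_congr rfl hh, ← Finset.mul_sum]
    simp only [hW]
    ring
  rw [Finset.sum_congr rfl hcoll]
  -- swap a and e
  have hswap4 : ∑ a ∈ S, ∑ e ∈ S.filter (fun e => e ∣ a),
        E * (Nat.totient e : ℝ) * W e * w a
      = ∑ e ∈ S, ∑ a ∈ S.filter (fun a => e ∣ a), E * (Nat.totient e : ℝ) * W e * w a := by
    refine Finset.sum_comm' ?_
    intro a e
    simp only [hS, Finset.mem_Icc, Finset.mem_filter]
    constructor
    · rintro ⟨ha, he, hea⟩
      exact ⟨⟨ha, hea⟩, he⟩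
    · rintro ⟨⟨ha, hea⟩, he⟩
      exact ⟨ha, he, hea⟩
  rw [hswap4]
  -- collapse the inner sum over a into W
  have hcoll2 : ∀ e ∈ S, ∑ a ∈ S.filter (fun a => e ∣ a), E * (Nat.totient e : ℝ) * W e * w a
      = E * ((Nat.totient e : ℝ) * W e * W e) := by
    intro e _
    rw [show (fun a => E * (Nat.totient e : ℝ) * W e * w a)
        = (fun a => (E * (Nat.totient e : ℝ) * W e) * w a) from funext fun a => by ring]
    rw [← Finset.mul_sum, hW]
    ring
  rw [Finset.sum_congr rfl hcoll2]
  -- final numeric bound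
  have hterm : ∀ e ∈ S, (Nat.totient e : ℝ) * W e * W e
      ≤ 2.442^2 * (1/((e:ℝ)^2 * (Nat.totient e : ℝ))) := by
    intro e heS
    simp only [hS, Finset.mem_Icc] at heS
    have hep : (0:ℝ) < (e:ℝ) := by exact_mod_cast (by omega : 0 < e)
    have hφe : (0:ℝ) < (Nat.totient e : ℝ) := by
      exact_mod_cast Nat.totient_pos.mpr (by omega)
    have hWle : W e ≤ 2.442 * (1/((e:ℝ) * (Nat.totient e : ℝ))) := by
      rw [hW]; exact st18_w N e (by omega)
    have hWnn : 0 ≤ W e := by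
      rw [hW]
      exact Finset.sum_nonneg fun b _ => by positivity
    have hsq2 : W e * W e ≤ (2.442 * (1/((e:ℝ) * (Nat.totient e : ℝ))))^2 := by
      rw [sq]
      exact mul_le_mul hWle hWle hWnn (by positivity)
    calc (Nat.totient e : ℝ) * W e * W e = (Nat.totient e : ℝ) * (W e * W e) := by ring
      _ ≤ (Nat.totient e : ℝ) * (2.442 * (1/((e:ℝ) * (Nat.totient e : ℝ))))^2 :=
          mul_le_mul_of_nonneg_left hsq2 (le_of_lt hφe)
      _ = 2.442^2 * (1/((e:ℝ)^2 * (Nat.totient e : ℝ))) := by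
          field_simp
  calc ∑ e ∈ S, E * ((Nat.totient e : ℝ) * W e * W e)
      ≤ ∑ e ∈ S, E * (2.442^2 * (1/((e:ℝ)^2 * (Nat.totient e : ℝ)))) := by
        refine Finset.sum_le_sum fun e he => ?_
        exact mul_le_mul_of_nonneg_left (hterm e he) (by linarith)
    _ = E * 2.442^2 * ∑ e ∈ S, 1/((e:ℝ)^2 * (Nat.totient e : ℝ)) := by
        rw [Finset.mul_sum]
        exact Finset.sum_congr rfl fun e _ => by ring
    _ ≤ E * 2.442^2 * 1.48 := by
        refine mul_le_mul_of_nonneg_left ?_ (by positivity)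
        simpa [hS] using st18_L N
    _ ≤ 8.83 * E := by nlinarith [hE1]

/-- For every real `z ≥ 1` and every `δ > 0`,
`∑_{n ≤ z, δ/2 < φ(n)/n ≤ δ} 1/φ(n) < 9·δ·log(e·z)`. -/
theorem stmt_18 (z : ℝ) (hz : 1 ≤ z) (δ : ℝ) (hδ : 0 < δ) :
    (∑' n : ℕ,
      Set.indicator
        {n : ℕ | 1 ≤ n ∧ (n : ℝ) ≤ z ∧
          δ / 2 < (Nat.totient n : ℝ) / n ∧ (Nat.totient n : ℝ) / n ≤ δ}
        (fun n => 1 / (Nat.totient n : ℝ)) n) < 9 * δ * Real.log (Real.exp 1 * z) := by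
  set A := {n : ℕ | 1 ≤ n ∧ (n : ℝ) ≤ z ∧
      δ / 2 < (Nat.totient n : ℝ) / n ∧ (Nat.totient n : ℝ) / n ≤ δ} with hA
  set N := Nat.floor z with hN
  set S := Finset.Icc 1 N with hS
  have hsupp : ∀ n ∉ S, Set.indicator A (fun n => 1 / (Nat.totient n : ℝ)) n = 0 := by
    intro n hn
    apply Set.indicator_of_notMem
    intro hmem
    obtain ⟨h1, h2, -⟩ := hmem
    exact hn (by simp only [hS, Finset.mem_Icc]; exact ⟨h1, Nat.le_floor h2⟩)
  rw [tsum_eq_sum hsupp]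
  have hlog : Real.log (Real.exp 1 * z) = 1 + Real.log z := by
    rw [Real.log_mul (Real.exp_ne_zero 1) (by linarith), Real.log_exp]
  rw [hlog]
  have hE1 : (1:ℝ) ≤ 1 + Real.log z := by
    have := Real.log_nonneg hz; linarith
  have hterm : ∀ n ∈ S, Set.indicator A (fun n => 1 / (Nat.totient n : ℝ)) n
      ≤ δ * ((1/(n:ℝ)) * (∑ d ∈ n.divisors, 1/(Nat.totient d : ℝ))^2) := by
    intro n hnS
    simp only [hS, Finset.mem_Icc] at hnS
    have hnp : (0:ℝ) < (n:ℝ) := by exact_mod_cast (by omega : 0 < n)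
    have hφ : (0:ℝ) < (Nat.totient n : ℝ) := by
      exact_mod_cast Nat.totient_pos.mpr (by omega)
    by_cases hmem : n ∈ A
    · rw [Set.indicator_of_mem hmem]
      obtain ⟨-, -, -, h4⟩ := hmem
      have hD := st18_totient_div n (by omega)
      have hDnn : (0:ℝ) ≤ (n:ℝ)/(Nat.totient n : ℝ) := by positivity
      have hsq : ((n:ℝ)/(Nat.totient n : ℝ))^2
          ≤ (∑ d ∈ n.divisors, 1/(Nat.totient d : ℝ))^2 := pow_le_pow_left₀ hDnn hD 2
      have key : 1/(Nat.totient n : ℝ) = ((Nat.totient n : ℝ)/(n:ℝ))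
          * ((1/(n:ℝ)) * ((n:ℝ)/(Nat.totient n : ℝ))^2) := by
        field_simp
      rw [key]
      calc ((Nat.totient n : ℝ)/(n:ℝ)) * ((1/(n:ℝ)) * ((n:ℝ)/(Nat.totient n : ℝ))^2)
          ≤ δ * ((1/(n:ℝ)) * ((n:ℝ)/(Nat.totient n : ℝ))^2) :=
            mul_le_mul_of_nonneg_right h4 (by positivity)
        _ ≤ δ * ((1/(n:ℝ)) * (∑ d ∈ n.divisors, 1/(Nat.totient d : ℝ))^2) := by
            refine mul_le_mul_of_nonneg_left ?_ (le_of_lt hδ)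
            exact mul_le_mul_of_nonneg_left hsq (by positivity)
    · rw [Set.indicator_of_notMem hmem]
      positivity
  calc ∑ n ∈ S, Set.indicator A (fun n => 1 / (Nat.totient n : ℝ)) n
      ≤ ∑ n ∈ S, δ * ((1/(n:ℝ)) * (∑ d ∈ n.divisors, 1/(Nat.totient d : ℝ))^2) :=
        Finset.sum_le_sum hterm
    _ = δ * ∑ n ∈ S, (1/(n:ℝ)) * (∑ d ∈ n.divisors, 1/(Nat.totient d : ℝ))^2 :=
        (Finset.mul_sum ..).symm
    _ ≤ δ * (8.83 * (1 + Real.log z)) :=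
        mul_le_mul_of_nonneg_left (st18_B z hz) (le_of_lt hδ)
    _ < 9 * δ * (1 + Real.log z) := by
        have hEpos : (0:ℝ) < 1 + Real.log z := by linarith
        nlinarith [mul_pos hδ hEpos]
end
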